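/- Let N ≥ 2 and define S(Y) := ∑_{m=1}^∞ (1/m²)·|∑_{j=1}^N e^{i m y_j}|² for a configuration Y of N distinct points 0 ≤ y₁ < ⋯ < y_N < 2π. Then S(Y) ≥ S(Ỹ), where Ỹ is the equidistant configuration ỹ_j = π(2j−1)/N, with equality if and only if all N cyclic gaps of Y equal 2π/N. -/

import Mathlib

/-- Periodic extension of a configuration `y` on the loop of circumference `2π`. -/
noncomputable def periodicExt {N : ℕ} (y : Fin N → ℝ) (k : ℕ) : ℝ :=
  if h : 0 < N then y ⟨k % N, Nat.mod_lt k h⟩ + 2 * Real.pi * (k / N : ℕ) else 0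

/-- The `j`-th cyclic gap of the configuration `y` on the loop of circumference `2π`. -/
noncomputable def cyclicGap {N : ℕ} (y : Fin N → ℝ) (j : Fin N) : ℝ :=
  periodicExt y ((j : ℕ) + 1) - periodicExt y (j : ℕ)

/-- A configuration is congruent to the equidistant one iff all cyclic gaps are `2π/N`. -/
def isEquidistant {N : ℕ} (y : Fin N → ℝ) : Prop :=
  ∀ j : Fin N, cyclicGap y j = 2 * Real.pi / N

/-- The quantity `S(Y) = ∑_{m=1}^∞ (1/m²)·|∑_{j=1}^N e^{i m y_j}|²` determining the
second-order weak-coupling coefficient of the ground-state energy. -/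
noncomputable def weakCouplingSum (N : ℕ) (y : Fin N → ℝ) : ℝ :=
  ∑' m : ℕ, (1 / ((m : ℝ) + 1) ^ 2) *
    ‖∑ j, Complex.exp (Complex.I * ((m + 1 : ℕ) : ℂ) * (y j : ℂ))‖ ^ 2

/-- The equidistant configuration `ỹ_j = π(2j−1)/N`, `j = 1, …, N`. -/
noncomputable def equidistantConfig (N : ℕ) : Fin N → ℝ :=
  fun j => Real.pi * (2 * (j : ℕ) + 1) / N

/-!
Expanding `|∑ⱼ e^{i m yⱼ}|² = ∑_{j,k} cos (m (y_k - y_j))` and summing the Fourier series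
`∑_{m ≥ 1} cos (m θ) / m² = π²/6 - π θ/2 + θ²/4` (valid for `0 ≤ θ ≤ 2π`, from the Bernoulli
polynomial `B₂`) turns `S(Y)` into the sum of this quadratic over the forward arc lengths
`d_{j,l}` from `y_j` to `y_{j+l}` (indices cyclic, `1 ≤ l ≤ N`). For each lag `l` these arcs
together cover the loop `l` times, so they sum to `2πl`; expanding the quadratic around the mean
`2πl/N` gives `S(Y) = S(Ỹ) + ¼ ∑_{l,j} (d_{j,l} - 2πl/N)²`. The remainder vanishes iff every
`d_{j,l} = 2πl/N`: for `l = 1` this says all cyclic gaps are `2π/N`, and conversely `d_{j,l}` is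
a sum of `l` consecutive gaps.
-/

open Real Finset

noncomputable def cosSeries (θ : ℝ) : ℝ := π ^ 2 / 6 - π * θ / 2 + θ ^ 2 / 4

theorem hasSum_cos_div_sq {θ : ℝ} (h0 : 0 ≤ θ) (h2 : θ ≤ 2 * π) :
    HasSum (fun m : ℕ => 1 / ((m : ℝ) + 1) ^ 2 * cos ((m + 1) * θ)) (cosSeries θ) := by
  have hx : θ / (2 * π) ∈ Set.Icc (0 : ℝ) 1 :=
    ⟨by positivity, (div_le_one (by positivity)).2 h2⟩
  have H := hasSum_one_div_nat_pow_mul_cos one_ne_zero hx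
  rw [← hasSum_nat_add_iff' 1] at H
  convert! H using 1
  · ext m
    push_cast
    congr 2
    field_simp
  · rw [Nat.mul_one, ← bernoulliFun.eq_1, bernoulliFun_two]
    simp only [cosSeries, sum_range_one, Nat.cast_zero, Nat.factorial_two]
    field_simp
    ring

theorem sum_cosSeries_eq_of_sum_eq {ι : Type*} (s : Finset ι) (x : ι → ℝ) (μ : ℝ)
    (hsum : ∑ i ∈ s, x i = #s * μ) :
    ∑ i ∈ s, cosSeries (x i) = #s * cosSeries μ + (∑ i ∈ s, (x i - μ) ^ 2) / 4 := by
  have hexp : ∀ i, cosSeries (x i) =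
      cosSeries μ + (x i - μ) ^ 2 / 4 + (μ - π) / 2 * (x i - μ) := fun i => by
    unfold cosSeries; ring
  simp only [hexp, sum_add_distrib, ← mul_sum, ← sum_div, sum_sub_distrib, sum_const, hsum,
    nsmul_eq_mul]
  ring

theorem norm_sum_exp_sq {ι : Type*} [Fintype ι] (y : ι → ℝ) (c : ℝ) :
    ‖∑ j, Complex.exp (Complex.I * c * y j)‖ ^ 2 = ∑ j, ∑ k, cos (c * (y k - y j)) := by
  have hnorm : ∀ z : ℂ, ‖z‖ ^ 2 = (starRingEnd ℂ z * z).re := fun z => by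
    rw [Complex.conj_mul']; norm_cast
  rw [hnorm, map_sum, sum_mul_sum, Complex.re_sum]
  refine sum_congr rfl fun j _ => ?_
  rw [Complex.re_sum]
  refine sum_congr rfl fun k _ => ?_
  rw [← Complex.exp_conj, ← Complex.exp_add, ← Complex.exp_ofReal_mul_I_re]
  congr 2
  simp only [map_mul, Complex.conj_I, Complex.conj_ofReal]
  push_cast
  ring

theorem Function.Periodic.sum_range_add {M : Type*} [AddCancelCommMonoid M] {g : ℕ → M} {N : ℕ}
    (hg : Function.Periodic g N) (a : ℕ) :
    ∑ i ∈ range N, g (a + i) = ∑ i ∈ range N, g i := by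
  induction a with
  | zero => simp
  | succ a ih =>
    have h := sum_range_succ' (fun i => g (a + i)) N
    rw [sum_range_succ, hg, add_zero] at h
    rw [← ih, add_right_cancel h]
    exact sum_congr rfl fun i _ => by rw [add_right_comm, add_assoc]

section PeriodicExt

variable {N : ℕ} (y : Fin N → ℝ)

theorem periodicExt_of_lt {k : ℕ} (hk : k < N) : periodicExt y k = y ⟨k, hk⟩ := by
  simp [periodicExt, Nat.zero_lt_of_lt hk, Nat.mod_eq_of_lt hk, Nat.div_eq_of_lt hk]

theorem periodicExt_add_mul (hN : 0 < N) (k q : ℕ) :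
    periodicExt y (k + N * q) = periodicExt y k + 2 * π * q := by
  simp only [periodicExt, dif_pos hN, Nat.add_mul_mod_self_left, Nat.add_mul_div_left _ _ hN]
  push_cast
  ring

theorem periodicExt_add_self (hN : 0 < N) (k : ℕ) :
    periodicExt y (k + N) = periodicExt y k + 2 * π := by
  simpa using periodicExt_add_mul y hN k 1

theorem monotone_periodicExt (hN : 0 < N) (hmono : Monotone y)
    (hmem : ∀ j, y j ∈ Set.Ico 0 (2 * π)) : Monotone (periodicExt y) := by
  refine monotone_nat_of_le_succ fun k => ?_
  obtain ⟨r, q, hr, rfl⟩ : ∃ r q, r < N ∧ k = r + N * q :=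
    ⟨k % N, k / N, Nat.mod_lt k hN, (Nat.mod_add_div k N).symm⟩
  rw [periodicExt_add_mul y hN, add_right_comm, periodicExt_add_mul y hN, periodicExt_of_lt y hr]
  gcongr
  rcases (Nat.add_one_le_of_lt hr).lt_or_eq with h | h
  · rw [periodicExt_of_lt y h]
    exact hmono (Fin.mk_le_mk.2 r.le_succ)
  · have hwrap := periodicExt_add_self y hN 0
    rw [zero_add] at hwrap
    rw [h, hwrap, periodicExt_of_lt y hN]
    linarith [(hmem ⟨r, hr⟩).2, (hmem ⟨0, hN⟩).1]

noncomputable def forwardDist (j l : ℕ) : ℝ := periodicExt y (j + l) - periodicExt y j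

theorem forwardDist_mem_Icc (hN : 0 < N) (hmono : Monotone y)
    (hmem : ∀ j, y j ∈ Set.Ico 0 (2 * π)) (j : ℕ) {l : ℕ} (hl : l ≤ N) :
    forwardDist y j l ∈ Set.Icc 0 (2 * π) := by
  have hP := monotone_periodicExt y hN hmono hmem
  have hfull : periodicExt y (j + l) ≤ periodicExt y (j + N) := hP (by omega)
  rw [periodicExt_add_self y hN] at hfull
  exact ⟨sub_nonneg.2 (hP (by omega)), by rw [forwardDist]; linarith⟩

theorem sum_forwardDist (hN : 0 < N) (l : ℕ) :
    ∑ j ∈ range N, forwardDist y j l = 2 * π * l := by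
  induction l with
  | zero => simp [forwardDist]
  | succ l ih =>
    have hstep : ∀ j, forwardDist y j (l + 1) =
        forwardDist y j l + (periodicExt y (j + 1 + l) - periodicExt y (j + l)) := fun j => by
      rw [forwardDist, forwardDist, add_right_comm j 1, add_assoc]
      ring
    rw [sum_congr rfl fun j _ => hstep j, sum_add_distrib, ih,
      sum_range_sub (fun j => periodicExt y (j + l)), zero_add, add_comm N,
      periodicExt_add_self y hN]
    push_cast
    ring

theorem forwardDist_periodic (hN : 0 < N) (l : ℕ) :
    Function.Periodic (fun j => forwardDist y j l) N := fun j => by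
  simp only [forwardDist, add_right_comm j N, periodicExt_add_self y hN]
  ring

theorem forwardDist_eq_sum_forwardDist_one (j l : ℕ) :
    forwardDist y j l = ∑ i ∈ range l, forwardDist y (j + i) 1 := by
  simp only [forwardDist, add_assoc]
  exact (sum_range_sub (fun i => periodicExt y (j + i)) l).symm

theorem cyclicGap_eq_forwardDist (j : Fin N) : cyclicGap y j = forwardDist y j 1 := rfl

theorem isEquidistant_iff_forwardDist (hN : 0 < N) :
    isEquidistant y ↔
      ∀ l ∈ range N, ∀ j ∈ range N, forwardDist y j (l + 1) = 2 * π * (l + 1) / N := by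
  simp only [isEquidistant, cyclicGap_eq_forwardDist]
  refine ⟨fun h l _ j _ => ?_, fun h j => ?_⟩
  · have hgap : ∀ i, forwardDist y i 1 = 2 * π / N := fun i => by
      rw [← (forwardDist_periodic y hN 1).map_mod_nat]
      exact h ⟨i % N, Nat.mod_lt i hN⟩
    simp only [forwardDist_eq_sum_forwardDist_one y j, hgap, sum_const, card_range, nsmul_eq_mul]
    push_cast
    ring
  · simpa using h 0 (mem_range.2 hN) j (mem_range.2 j.isLt)

end PeriodicExt

section WeakCouplingSum

variable {N : ℕ} (y : Fin N → ℝ)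

/-- The partner `k` of `j` is reached by going forward `l + 1 ∈ [1, N]` steps; the diagonal
`k = j` is the full turn `l + 1 = N`. -/
theorem sum_cos_sub_eq_sum_forwardDist (hN : 0 < N) (c : ℕ) :
    ∑ j, ∑ k, cos (c * (y k - y j)) =
      ∑ l ∈ range N, ∑ j ∈ range N, cos (c * forwardDist y j (l + 1)) := by
  have hy : ∀ k : Fin N, y k = periodicExt y k := fun k => (periodicExt_of_lt y k.isLt).symm
  simp only [hy]
  rw [Fin.sum_univ_eq_sum_range
    (fun j => ∑ k : Fin N, cos (c * (periodicExt y k - periodicExt y j)))]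
  conv_rhs => rw [sum_comm]
  refine sum_congr rfl fun j _ => ?_
  have hperiodic : Function.Periodic (fun k => cos (c * (periodicExt y k - periodicExt y j))) N :=
    fun k => by
      dsimp only
      rw [periodicExt_add_self y hN, show c * (periodicExt y k + 2 * π - periodicExt y j) =
        c * (periodicExt y k - periodicExt y j) + c * (2 * π) by ring, cos_add_nat_mul_two_pi]
  rw [Fin.sum_univ_eq_sum_range (fun k => cos (c * (periodicExt y k - periodicExt y j))),
    ← hperiodic.sum_range_add (j + 1)]
  exact sum_congr rfl fun l _ => by rw [forwardDist, add_assoc, add_comm 1 l]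

theorem weakCouplingSum_eq_sum_cosSeries (hN : 0 < N) (hmono : Monotone y)
    (hmem : ∀ j, y j ∈ Set.Ico 0 (2 * π)) :
    weakCouplingSum N y = ∑ l ∈ range N, ∑ j ∈ range N, cosSeries (forwardDist y j (l + 1)) := by
  have hterm : ∀ m : ℕ, 1 / ((m : ℝ) + 1) ^ 2 *
      ‖∑ j, Complex.exp (Complex.I * ((m + 1 : ℕ) : ℂ) * (y j : ℂ))‖ ^ 2 =
      ∑ l ∈ range N, ∑ j ∈ range N,
        1 / ((m : ℝ) + 1) ^ 2 * cos ((m + 1) * forwardDist y j (l + 1)) := fun m => by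
    rw [← Complex.ofReal_natCast, norm_sum_exp_sq, sum_cos_sub_eq_sum_forwardDist y hN]
    simp only [mul_sum]
    push_cast
    rfl
  unfold weakCouplingSum
  simp only [hterm]
  refine (hasSum_sum fun l hl => hasSum_sum fun j _ => ?_).tsum_eq
  have hD := forwardDist_mem_Icc y hN hmono hmem j (mem_range.1 hl)
  exact hasSum_cos_div_sq hD.1 hD.2

noncomputable def lagDeviation : ℝ :=
  ∑ l ∈ range N, ∑ j ∈ range N, (forwardDist y j (l + 1) - 2 * π * (l + 1) / N) ^ 2

theorem lagDeviation_nonneg : 0 ≤ lagDeviation y := by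
  unfold lagDeviation
  positivity

theorem lagDeviation_eq_zero_iff (hN : 0 < N) : lagDeviation y = 0 ↔ isEquidistant y := by
  rw [isEquidistant_iff_forwardDist y hN, lagDeviation,
    sum_eq_zero_iff_of_nonneg fun _ _ => by positivity]
  refine forall₂_congr fun l _ => ?_
  rw [sum_eq_zero_iff_of_nonneg fun _ _ => sq_nonneg _]
  simp only [pow_eq_zero_iff two_ne_zero, sub_eq_zero]

theorem weakCouplingSum_eq_add_lagDeviation (hN : 0 < N) (hmono : Monotone y)
    (hmem : ∀ j, y j ∈ Set.Ico 0 (2 * π)) :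
    weakCouplingSum N y =
      ∑ l ∈ range N, N * cosSeries (2 * π * (l + 1) / N) + lagDeviation y / 4 := by
  rw [weakCouplingSum_eq_sum_cosSeries y hN hmono hmem, lagDeviation, sum_div, ← sum_add_distrib]
  refine sum_congr rfl fun l _ => ?_
  have hmean : ∑ j ∈ range N, forwardDist y j (l + 1) = #(range N) * (2 * π * (l + 1) / N) := by
    rw [sum_forwardDist y hN, card_range]
    field_simp
    push_cast
    ring
  simpa using sum_cosSeries_eq_of_sum_eq (range N) _ _ hmean

end WeakCouplingSum

section Equidistant

variable {N : ℕ}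

theorem monotone_equidistantConfig : Monotone (equidistantConfig N) := fun j k hjk => by
  unfold equidistantConfig
  gcongr
  exact_mod_cast hjk

theorem equidistantConfig_mem (j : Fin N) : equidistantConfig N j ∈ Set.Ico 0 (2 * π) := by
  have hN : (0 : ℝ) < N := by exact_mod_cast j.pos
  have hj : (j : ℝ) + 1 ≤ N := by exact_mod_cast j.isLt
  refine ⟨by unfold equidistantConfig; positivity, ?_⟩
  rw [equidistantConfig, div_lt_iff₀ hN]
  nlinarith [pi_pos]

theorem periodicExt_equidistantConfig (hN : 0 < N) (k : ℕ) :
    periodicExt (equidistantConfig N) k = π * (2 * k + 1) / N := by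
  have hN' : (N : ℝ) ≠ 0 := by positivity
  conv_rhs => rw [← Nat.mod_add_div k N]
  simp only [periodicExt, dif_pos hN, equidistantConfig]
  push_cast
  field_simp
  ring

theorem forwardDist_equidistantConfig (hN : 0 < N) (j l : ℕ) :
    forwardDist (equidistantConfig N) j l = 2 * π * l / N := by
  simp only [forwardDist, periodicExt_equidistantConfig hN]
  push_cast
  ring

theorem lagDeviation_equidistantConfig (hN : 0 < N) : lagDeviation (equidistantConfig N) = 0 := by
  simp [lagDeviation, forwardDist_equidistantConfig hN]

theorem weakCouplingSum_eq_equidistant_add (hN : 0 < N) {y : Fin N → ℝ} (hmono : Monotone y)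
    (hmem : ∀ j, y j ∈ Set.Ico 0 (2 * π)) :
    weakCouplingSum N y = weakCouplingSum N (equidistantConfig N) + lagDeviation y / 4 := by
  rw [weakCouplingSum_eq_add_lagDeviation y hN hmono hmem,
    weakCouplingSum_eq_add_lagDeviation _ hN monotone_equidistantConfig equidistantConfig_mem,
    lagDeviation_equidistantConfig hN, zero_div, add_zero]

end Equidistant

/-- For N ≥ 2 and a configuration Y of N distinct points
0 ≤ y₁ < ⋯ < y_N < 2π one has S(Y) ≥ S(Ỹ) for the equidistant configuration Ỹ,
with equality if and only if all N cyclic gaps of Y equal 2π/N. -/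
theorem weakCouplingSum_min (N : ℕ) (hN : 2 ≤ N) (y : Fin N → ℝ)
    (hmono : StrictMono y) (hmem : ∀ j, y j ∈ Set.Ico 0 (2 * Real.pi)) :
    weakCouplingSum N y ≥ weakCouplingSum N (equidistantConfig N) ∧
    (weakCouplingSum N y = weakCouplingSum N (equidistantConfig N) ↔ isEquidistant y) := by
  have hN₀ : 0 < N := by omega
  rw [weakCouplingSum_eq_equidistant_add hN₀ hmono.monotone hmem,
    ← lagDeviation_eq_zero_iff y hN₀]
  have hdev := lagDeviation_nonneg y
  exact ⟨by linarith, ⟨fun h => by linarith, fun h => by linarith⟩⟩
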